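/- arXiv:math/0401242 — 2 statements merged into one kernel-verified Lean document; each statement's English description precedes it below -/
import Mathlib

section
/- Let B be a unital C*-algebra and a ∈ B with 0 ≤ a ≤ 1, and suppose there exists x ∈ B with x*·a·x = 1. Then there exists an integer N > 0, depending only on ‖x‖ (not on B or a), and an element y ∈ B with ‖y‖ ≤ 1, such that y*·f_N(a)·y = 1, where f_N is the continuous function on [0,1] equal to 0 on [0, 1/(N+1)], equal to 1 on [1/N, 1], and linear in between. In particular f_N(a) is full in B. -/
open scoped ENNReal MultiplierAlgebra

/-- An element `b` of a topological ring is *full* if the closure of the two-sided ideal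
it generates is the whole ring. -/
def IsFullIn {A : Type*} [NonUnitalNonAssocRing A] [TopologicalSpace A] (b : A) : Prop :=
  closure ((TwoSidedIdeal.span {b} : TwoSidedIdeal A) : Set A) = Set.univ

/-- Property (P1): every full element `b` admits `x, y` with `x * b * y = 1`. -/
def PropP1 (B : Type*) [Ring B] [TopologicalSpace B] : Prop :=
  ∀ b : B, IsFullIn b → ∃ x y : B, x * b * y = 1

/-- The piecewise-linear function `f_n` : `0` on `[0, 1/(n+1)]`, `1` on `[1/n, ∞)`,
linear in between. -/
noncomputable def fcut (n : ℕ) (t : ℝ) : ℝ := min 1 (max 0 ((n * (n + 1) : ℝ) * t - n))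


/-!
Take `N = n + 1` with `n > r²`. With `c = a f_n(a)` we have `‖a - c‖ ≤ 1/n`, so `d = x* c x`
satisfies `‖1 - d‖ ≤ ‖x‖²/n < 1`; hence `d` is positive and invertible, and
`d^{-1/2} d d^{-1/2} = 1`.
Writing `c = e²` with `e = (a f_n(a))^{1/2}`, the element `y = e x d^{-1/2}` satisfies
`y* y = 1`, so `‖y‖ ≤ 1`, and also `y* f_{n+1}(a) y = 1` because `f_n f_{n+1} = f_n`.
-/

lemma fcut_nonneg (n : ℕ) (t : ℝ) : 0 ≤ fcut n t :=
  le_min zero_le_one (le_max_left _ _)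

@[fun_prop]
lemma continuous_fcut (n : ℕ) : Continuous (fcut n) := by
  unfold fcut; fun_prop

lemma fcut_eq_zero_of_le {n : ℕ} {t : ℝ} (h : t ≤ 1 / (n + 1)) : fcut n t = 0 := by
  rw [le_div_iff₀ (by positivity)] at h
  have : (n : ℝ) * (n + 1) * t ≤ n := by nlinarith [n.cast_nonneg (α := ℝ)]
  rw [fcut, max_eq_left (by linarith), min_eq_right zero_le_one]

lemma fcut_eq_one_of_le {n : ℕ} (hn : 0 < n) {t : ℝ} (h : 1 / n ≤ t) : fcut n t = 1 := by
  rw [div_le_iff₀ (by positivity)] at h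
  have : 1 ≤ (n : ℝ) * (n + 1) * t - n := by nlinarith
  rw [fcut, max_eq_right (by linarith), min_eq_left this]

lemma fcut_mul_fcut_succ (n : ℕ) (t : ℝ) : fcut n t * fcut (n + 1) t = fcut n t := by
  rcases le_or_gt t (1 / (n + 1)) with h | h
  · rw [fcut_eq_zero_of_le h, zero_mul]
  · rw [fcut_eq_one_of_le n.succ_pos (by exact_mod_cast h.le), mul_one]

lemma abs_sub_mul_fcut_le {n : ℕ} (hn : 0 < n) {t : ℝ} (ht : 0 ≤ t) :
    |t - t * fcut n t| ≤ 1 / n := by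
  rcases le_or_gt (1 / n : ℝ) t with h | h
  · rw [fcut_eq_one_of_le hn h, mul_one, sub_self, abs_zero]
    positivity
  · have hf : fcut n t ≤ 1 := min_le_left _ _
    rw [abs_of_nonneg (by nlinarith [fcut_nonneg n t])]
    nlinarith [fcut_nonneg n t]

lemma isFullIn_of_mul_mul_eq_one {R : Type*} [Ring R] [TopologicalSpace R] {b x y : R}
    (h : x * b * y = 1) : IsFullIn b := by
  have hone : (1 : R) ∈ TwoSidedIdeal.span {b} := h ▸ TwoSidedIdeal.mul_mem_right _ _ _
    (TwoSidedIdeal.mul_mem_left _ _ _ (TwoSidedIdeal.subset_span rfl))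
  have htop : ((TwoSidedIdeal.span {b} : TwoSidedIdeal R) : Set R) = Set.univ :=
    Set.eq_univ_of_forall fun z => by simpa using TwoSidedIdeal.mul_mem_left _ z 1 hone
  rw [IsFullIn, htop, closure_univ]

section NormedStarRing

variable {E : Type*} [NormedRing E] [StarRing E]

lemma norm_star_mul_mul_le [NormedStarGroup E] (x m : E) :
    ‖star x * m * x‖ ≤ ‖x‖ ^ 2 * ‖m‖ :=
  calc ‖star x * m * x‖ ≤ ‖star x‖ * ‖m‖ * ‖x‖ := norm_mul₃_le
    _ = ‖x‖ ^ 2 * ‖m‖ := by rw [norm_star]; ring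

lemma norm_le_one_of_star_mul_self_eq_one [CStarRing E] {y : E} (h : star y * y = 1) :
    ‖y‖ ≤ 1 := by
  have hone : ‖(1 : E)‖ * ‖(1 : E)‖ = ‖(1 : E)‖ := by
    rw [← CStarRing.norm_star_mul_self, star_one, one_mul]
  have hy : ‖y‖ * ‖y‖ = ‖(1 : E)‖ := by rw [← CStarRing.norm_star_mul_self, h]
  have hone_le : ‖(1 : E)‖ ≤ 1 := by nlinarith
  nlinarith [norm_nonneg y]

end NormedStarRing

section CStarAlgebra

variable {A : Type*} [CStarAlgebra A] [PartialOrder A] [StarOrderedRing A]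

lemma exists_star_mul_mul_eq_one_of_isUnit {d : A} (hd : 0 ≤ d) (hu : IsUnit d) :
    ∃ s : A, star s * d * s = 1 := by
  refine ⟨d ^ (-(1 / 2) : ℝ), ?_⟩
  rw [(CFC.rpow_nonneg (a := d)).isSelfAdjoint.star_eq]
  nth_rw 2 [← CFC.rpow_one d]
  rw [← CFC.rpow_add hu, ← CFC.rpow_add hu]
  norm_num
  exact CFC.rpow_zero d

lemma norm_sub_cfc_mul_fcut_le {a : A} (ha : 0 ≤ a) {n : ℕ} (hn : 0 < n) :
    ‖a - cfc (fun t => t * fcut n t) a‖ ≤ 1 / n := by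
  nth_rw 1 [← cfc_id' ℝ a]
  rw [← cfc_sub _ _ a]
  exact norm_cfc_le (by positivity) fun t ht =>
    abs_sub_mul_fcut_le hn (spectrum_nonneg_of_nonneg ha ht)

lemma isUnit_star_mul_cfc_mul_fcut_mul {a x : A} (ha : 0 ≤ a) (hx : star x * a * x = 1)
    {n : ℕ} (hn : ‖x‖ ^ 2 < n) : IsUnit (star x * cfc (fun t => t * fcut n t) a * x) := by
  set c := cfc (fun t => t * fcut n t) a
  have hn' : (0 : ℝ) < n := (sq_nonneg _).trans_lt hn
  have hsmall : ‖1 - star x * c * x‖ < 1 :=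
    calc ‖1 - star x * c * x‖ = ‖star x * (a - c) * x‖ := by rw [← hx]; noncomm_ring
      _ ≤ ‖x‖ ^ 2 * (1 / n) := (norm_star_mul_mul_le x _).trans <| by
          gcongr; exact norm_sub_cfc_mul_fcut_le ha (by exact_mod_cast hn')
      _ < 1 := by rwa [mul_one_div, div_lt_one hn']
  simpa using isUnit_one_sub_of_norm_lt_one hsmall

theorem exists_norm_le_one_star_mul_cfc_fcut_succ_mul_eq_one {a x : A} (ha : 0 ≤ a)
    (hx : star x * a * x = 1) {n : ℕ} (hn : ‖x‖ ^ 2 < n) :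
    ∃ y : A, ‖y‖ ≤ 1 ∧ star y * cfc (fcut (n + 1)) a * y = 1 := by
  set e := cfc (fun t => Real.sqrt (t * fcut n t)) a
  set c := cfc (fun t => t * fcut n t) a
  have hspec : ∀ t ∈ spectrum ℝ a, 0 ≤ t * fcut n t := fun t ht =>
    mul_nonneg (spectrum_nonneg_of_nonneg ha ht) (fcut_nonneg n t)
  have he : IsSelfAdjoint e := (cfc_nonneg fun t _ => Real.sqrt_nonneg _).isSelfAdjoint
  have hee : e * e = c := by
    rw [← cfc_mul _ _ a]
    exact cfc_congr fun t ht => Real.mul_self_sqrt (hspec t ht)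
  have hefe : e * cfc (fcut (n + 1)) a * e = c := by
    rw [← cfc_mul _ _ a, ← cfc_mul _ _ a]
    refine cfc_congr fun t ht => ?_
    rw [mul_right_comm, Real.mul_self_sqrt (hspec t ht), mul_assoc, fcut_mul_fcut_succ]
  have hc : 0 ≤ c := cfc_nonneg hspec
  obtain ⟨s, hs⟩ := exists_star_mul_mul_eq_one_of_isUnit (star_left_conjugate_nonneg hc x)
    (isUnit_star_mul_cfc_mul_fcut_mul ha hx hn)
  have hconj : ∀ m : A,
      star (e * x * s) * m * (e * x * s) = star s * (star x * (e * m * e) * x) * s := fun m => by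
    simp only [star_mul, he.star_eq, mul_assoc]
  have hunit : star (e * x * s) * (e * x * s) = 1 := by
    rw [← mul_one (star _), hconj, mul_one, hee, hs]
  exact ⟨e * x * s, norm_le_one_of_star_mul_self_eq_one hunit, by rw [hconj, hefe, hs]⟩

end CStarAlgebra

universe u

/-- if `0 ≤ a ≤ 1` and `star x * a * x = 1` then for some `N` depending only
on `‖x‖` there is a contraction `y` with `star y * f_N(a) * y = 1`; in particular `f_N(a)`
is full. -/
theorem stmt6 (r : ℝ) :
    ∃ N : ℕ, 0 < N ∧
      ∀ (B : Type u) [CStarAlgebra B] [PartialOrder B] [StarOrderedRing B],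
        ∀ a x : B, 0 ≤ a → a ≤ 1 → star x * a * x = 1 → ‖x‖ ≤ r →
          (∃ y : B, ‖y‖ ≤ 1 ∧ star y * cfc (fcut N) a * y = 1) ∧
          IsFullIn (cfc (fcut N) a) := by
  refine ⟨⌊r ^ 2⌋₊ + 1 + 1, Nat.succ_pos _, fun B _ _ _ a x ha _ hx hxr => ?_⟩
  have hn : ‖x‖ ^ 2 < (⌊r ^ 2⌋₊ + 1 : ℕ) := by
    push_cast
    exact (pow_le_pow_left₀ (norm_nonneg x) hxr 2).trans_lt (Nat.lt_floor_add_one _)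
  obtain ⟨y, hy, hyfy⟩ := exists_norm_le_one_star_mul_cfc_fcut_succ_mul_eq_one ha hx hn
  exact ⟨⟨y, hy, hyfy⟩, isFullIn_of_mul_mul_eq_one hyfy⟩
end

section
/- Let B be a unital C*-algebra with a positive element a satisfying 0 ≤ a ≤ 1, elements b ∈ B with 0 ≤ b ≤ 1 and ab = a, where a is full. If B has property (P1), then there exists x ∈ B with ‖x‖ ≤ 1 such that x*·b·x = 1. -/
open scoped ENNReal MultiplierAlgebra

/-! (P1) gives `u * a * v = 1`, so `w = (u * a)⋆` has the left inverse `v⋆`, whence `w⋆ * w`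
is invertible and `x = w * (w⋆ * w) ^ (-1/2)` is an isometry. As `w⋆ * b = u * a * b = w⋆`,
also `x⋆ * b * x = x⋆ * x = 1`. -/

theorem CStarRing.norm_le_one_of_star_mul_self_eq_one {E : Type*} [NormedRing E] [StarRing E]
    [CStarRing E] {x : E} (hx : star x * x = 1) : ‖x‖ ≤ 1 := by
  have h1 : ‖(1 : E)‖ = ‖(1 : E)‖ * ‖(1 : E)‖ := by
    simpa using CStarRing.norm_star_mul_self (x := (1 : E))
  have hone : ‖(1 : E)‖ ≤ 1 := by nlinarith [norm_nonneg (1 : E)]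
  have hx' : ‖x‖ * ‖x‖ ≤ 1 := by rw [← CStarRing.norm_star_mul_self, hx]; exact hone
  nlinarith [norm_nonneg x]

section LeftInvertible

variable {A : Type*} [CStarAlgebra A] [PartialOrder A] [StarOrderedRing A]

lemma one_le_norm_sq_smul_star_mul_self_of_mul_eq_one {u w : A} (h : u * w = 1) :
    1 ≤ ‖u‖ ^ 2 • (star w * w) :=
  calc (1 : A) = star (u * w) * (u * w) := by rw [h, star_one, one_mul]
    _ = star w * (star u * u) * w := by rw [star_mul]; noncomm_ring
    _ ≤ star w * algebraMap ℝ A (‖u‖ ^ 2) * w :=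
        star_left_conjugate_le_conjugate CStarAlgebra.star_mul_le_algebraMap_norm_sq w
    _ = ‖u‖ ^ 2 • (star w * w) := by
        rw [Algebra.algebraMap_eq_smul_one, mul_smul_comm, mul_one, smul_mul_assoc]

lemma isStrictlyPositive_star_mul_self_of_mul_eq_one {u w : A} (h : u * w = 1) :
    IsStrictlyPositive (star w * w) := by
  nontriviality A
  have hu : 0 < ‖u‖ ^ 2 := by
    have : u ≠ 0 := left_ne_zero_of_mul_eq_one h
    positivity
  have hscaled : IsStrictlyPositive (‖u‖ ^ 2 • (star w * w)) :=
    isStrictlyPositive_one.of_le (one_le_norm_sq_smul_star_mul_self_of_mul_eq_one h)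
  simpa [smul_smul, inv_mul_cancel₀ hu.ne'] using hscaled.smul (inv_pos.mpr hu)

lemma exists_star_mul_self_eq_one_of_mul_eq_one {u w : A} (h : u * w = 1) :
    ∃ t : A, star (w * t) * (w * t) = 1 := by
  refine ⟨(star w * w) ^ (-(1 / 2) : ℝ), ?_⟩
  rw [star_mul, (IsSelfAdjoint.of_nonneg CFC.rpow_nonneg).star_eq, mul_assoc,
    ← mul_assoc (star w), ← mul_assoc]
  exact CFC.conjugate_rpow_neg_one_half _ (isStrictlyPositive_star_mul_self_of_mul_eq_one h)

end LeftInvertible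

theorem stmt7_general {B : Type*} [CStarAlgebra B] [PartialOrder B] [StarOrderedRing B]
    (hP1 : PropP1 B)
    (a b : B)
    (hab : a * b = a) (hafull : IsFullIn a) :
    ∃ x : B, ‖x‖ ≤ 1 ∧ star x * b * x = 1 := by
  obtain ⟨u, v, huav⟩ := hP1 a hafull
  have hw : star v * star (u * a) = 1 := by rw [← star_mul, huav, star_one]
  obtain ⟨t, ht⟩ := exists_star_mul_self_eq_one_of_mul_eq_one hw
  set x := star (u * a) * t
  have hxb : star x * b = star x := by simp only [x, star_mul, star_star, mul_assoc, hab]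
  exact ⟨x, CStarRing.norm_le_one_of_star_mul_self_eq_one ht, by rw [hxb, ht]⟩

/-- if `B` has (P1), `0 ≤ a, b ≤ 1`, `a * b = a` and `a` is full, then there
is a contraction `x` with `star x * b * x = 1`. -/
theorem stmt7 {B : Type*} [CStarAlgebra B] [PartialOrder B] [StarOrderedRing B]
    (hP1 : PropP1 B)
    (a b : B) (ha0 : 0 ≤ a) (ha1 : a ≤ 1) (hb0 : 0 ≤ b) (hb1 : b ≤ 1)
    (hab : a * b = a) (hafull : IsFullIn a) :
    ∃ x : B, ‖x‖ ≤ 1 ∧ star x * b * x = 1 :=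
  stmt7_general hP1 a b hab hafull
end
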